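/- Let n ≥ 1, d ≥ 1, and let x : Fin n → ℝ × (Fin d → ℝ) be a dataset whose first coordinates have sample mean m₁ ≠ 0 and sample standard deviation s₁ > 0, and whose second coordinates have sample mean m₂ and positive definite sample covariance S₂. For each p > s₁⁻¹·|m₁| (so that |m₁| < p·s₁), let m*(p) = (−p²·m₁ + sign(m₁)·p·√((p²+4)·m₁² + 4·s₁²))/2 and σ*(p) = |m*(p)|/p be the first-factor parameters of the constrained-optimal product Gaussian density, whose second-factor parameters are (m₂, S₂). Then as p → ∞: m*(p) → m₁ + s₁²/m₁, σ*(p) → 0, while the second-factor mean and covariance equal m₂ and S₂ for every such p. -/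

import Mathlib

open Matrix Filter

/-- Multivariate Gaussian density. -/
noncomputable def mGaussPdf {d : ℕ} (m : Fin d → ℝ) (S : Matrix (Fin d) (Fin d) ℝ)
    (t : Fin d → ℝ) : ℝ :=
  (2 * Real.pi) ^ (-(d : ℝ) / 2) * S.det ^ (-(1 : ℝ) / 2) *
    Real.exp (-(1 / 2) * ((t - m) ⬝ᵥ S⁻¹.mulVec (t - m)))

lemma aux_trace_eq_sum_eigenvalues {d : ℕ} {M : Matrix (Fin d) (Fin d) ℝ}
    (hM : M.IsHermitian) : M.trace = ∑ i, hM.eigenvalues i := by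
  conv_lhs => rw [hM.spectral_theorem, Unitary.conjStarAlgAut_apply]
  rw [Matrix.trace_mul_cycle]
  rw [show (star (hM.eigenvectorUnitary : Matrix (Fin d) (Fin d) ℝ)) *
      (hM.eigenvectorUnitary : Matrix (Fin d) (Fin d) ℝ) = 1 from
    Unitary.coe_star_mul_self _ ]
  simp [Matrix.trace_diagonal]

lemma aux_key {d : ℕ} {M : Matrix (Fin d) (Fin d) ℝ} (hM : M.PosDef) :
    Real.log M.det + d ≤ M.trace := by
  have h1 : M.det = ∏ i, hM.1.eigenvalues i := by
    rw [hM.1.det_eq_prod_eigenvalues]; norm_num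
  have h2 : Real.log M.det = ∑ i, Real.log (hM.1.eigenvalues i) := by
    rw [h1, Real.log_prod]
    intro i _; exact (hM.eigenvalues_pos i).ne'
  rw [h2, aux_trace_eq_sum_eigenvalues hM.1]
  have : ∀ i : Fin d, Real.log (hM.1.eigenvalues i) + 1 ≤ hM.1.eigenvalues i := by
    intro i
    have := Real.log_le_sub_one_of_pos (hM.eigenvalues_pos i)
    linarith
  calc (∑ i, Real.log (hM.1.eigenvalues i)) + d
      = ∑ i : Fin d, (Real.log (hM.1.eigenvalues i) + 1) := by
        simp [Finset.sum_add_distrib]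
    _ ≤ ∑ i, hM.1.eigenvalues i := Finset.sum_le_sum fun i _ => this i

lemma aux_conj_posDef {d : ℕ} {Q R : Matrix (Fin d) (Fin d) ℝ}
    (hQ : Q.PosDef) (hR : R.IsHermitian) (hRdet : R.det ≠ 0) :
    (R * Q * R).PosDef := by
  refine posDef_iff_dotProduct_mulVec.mpr ⟨?_, ?_⟩
  · have h1 : (R * Q * R).conjTranspose = Rᴴ * Qᴴ * Rᴴ := by
      rw [Matrix.conjTranspose_mul, Matrix.conjTranspose_mul, Matrix.mul_assoc]
    rw [Matrix.IsHermitian, h1, hR.eq, hQ.1.eq]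
  · intro x hx
    have hRx : R *ᵥ x ≠ 0 := by
      intro h
      apply hx
      have : R⁻¹ *ᵥ (R *ᵥ x) = x := by
        rw [Matrix.mulVec_mulVec, Matrix.nonsing_inv_mul _ (Ne.isUnit hRdet), Matrix.one_mulVec]
      rw [← this, h, Matrix.mulVec_zero]
    have := hQ.dotProduct_mulVec_pos hRx
    have hconj : R * Q * R = Rᴴ * Q * R := by rw [hR.eq]
    rw [hconj]
    simpa only [star_mulVec, Matrix.dotProduct_mulVec, Matrix.vecMul_vecMul] using this

open scoped MatrixOrder in
lemma aux_logdet_trace {d : ℕ} {P Q : Matrix (Fin d) (Fin d) ℝ}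
    (hP : P.PosDef) (hQ : Q.PosDef) :
    Real.log P.det + d ≤ Real.log Q.det + (Q⁻¹ * P).trace := by
  set R := CFC.sqrt P with hRdef
  have hRR : R * R = P := CFC.sqrt_mul_sqrt_self P hP.posSemidef.nonneg
  have hRherm : R.IsHermitian := (CFC.sqrt_nonneg P).posSemidef.1
  have hRdet : R.det ≠ 0 := by
    intro h
    have : P.det = 0 := by rw [← hRR, Matrix.det_mul, h, zero_mul]
    exact hP.det_pos.ne' this
  have hM : (R * Q⁻¹ * R).PosDef := aux_conj_posDef hQ.inv hRherm hRdet
  have hdet : (R * Q⁻¹ * R).det = P.det * Q.det⁻¹ := by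
    rw [Matrix.det_mul, Matrix.det_mul, Matrix.det_nonsing_inv]
    rw [← hRR, Matrix.det_mul, Ring.inverse_eq_inv]; ring
  have htr : (R * Q⁻¹ * R).trace = (Q⁻¹ * P).trace := by
    rw [Matrix.trace_mul_cycle, hRR, Matrix.trace_mul_comm]
  have := aux_key hM
  rw [hdet, htr] at this
  rw [Real.log_mul hP.det_pos.ne' (inv_ne_zero hQ.det_pos.ne'), Real.log_inv] at this
  linarith

lemma aux_dot_trace {d : ℕ} (B : Matrix (Fin d) (Fin d) ℝ) (v : Fin d → ℝ) :
    v ⬝ᵥ B.mulVec v = (B * Matrix.vecMulVec v v).trace := by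
  simp only [Matrix.trace, Matrix.diag, Matrix.mul_apply, Matrix.vecMulVec_apply,
    dotProduct, Matrix.mulVec, Finset.mul_sum]
  apply Finset.sum_congr rfl
  intro i _
  apply Finset.sum_congr rfl
  intro j _
  ring

lemma aux_sum_dot {d n : ℕ} (a : Fin n → Fin d → ℝ) (w : Fin d → ℝ) :
    ∑ i, (a i ⬝ᵥ w) = (∑ i, a i) ⬝ᵥ w := by
  simp only [dotProduct, Finset.sum_apply, Finset.sum_mul]
  rw [Finset.sum_comm]

lemma aux_dot_sum {d n : ℕ} (a : Fin n → Fin d → ℝ) (w : Fin d → ℝ) :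
    ∑ i, (w ⬝ᵥ a i) = w ⬝ᵥ (∑ i, a i) := by
  simp only [dotProduct, Finset.sum_apply, Finset.mul_sum]
  rw [Finset.sum_comm]

lemma aux_log_pdf {d : ℕ} (μ : Fin d → ℝ) (S : Matrix (Fin d) (Fin d) ℝ)
    (hS : S.PosDef) (t : Fin d → ℝ) :
    Real.log (mGaussPdf μ S t) = (-(d : ℝ) / 2) * Real.log (2 * Real.pi)
      + (-(1 : ℝ) / 2) * Real.log S.det
      + (-(1 / 2) * ((t - μ) ⬝ᵥ S⁻¹.mulVec (t - μ))) := by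
  have h2pi : (0:ℝ) < 2 * Real.pi := by positivity
  have h1 : (0:ℝ) < (2 * Real.pi) ^ (-(d : ℝ) / 2) := Real.rpow_pos_of_pos h2pi _
  have h2 : (0:ℝ) < S.det ^ (-(1 : ℝ) / 2) := Real.rpow_pos_of_pos hS.det_pos _
  unfold mGaussPdf
  rw [Real.log_mul (mul_pos h1 h2).ne' (Real.exp_ne_zero _),
    Real.log_mul h1.ne' h2.ne',
    Real.log_rpow h2pi, Real.log_rpow hS.det_pos, Real.log_exp]

/-- As `p → ∞` (leakage `α → 0`), the first-factor parameters of the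
constrained-optimal product Gaussian converge: `m*(p) → m₁ + s₁²/m₁` and
`σ*(p) → 0`, while for every `p > s₁⁻¹ |m₁|` the second factor is the
maximum likelihood Gaussian with parameters `(m₂, S₂)`. -/
theorem c3l_parameters_limit
    (n d : ℕ) (hn : 1 ≤ n) (hd : 1 ≤ d)
    (x : Fin n → ℝ × (Fin d → ℝ))
    (m₁ : ℝ) (hm₁def : m₁ = (1 / (n : ℝ)) * ∑ i, (x i).1) (hm₁ : m₁ ≠ 0)
    (s₁ : ℝ) (hs₁ : 0 < s₁)
    (hs₁def : s₁ ^ 2 = (1 / (n : ℝ)) * ∑ i, ((x i).1 - m₁) ^ 2)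
    (m₂ : Fin d → ℝ) (hm₂ : m₂ = (1 / (n : ℝ)) • ∑ i, (x i).2)
    (S₂ : Matrix (Fin d) (Fin d) ℝ)
    (hS₂ : S₂ = (1 / (n : ℝ)) • ∑ i, Matrix.vecMulVec ((x i).2 - m₂) ((x i).2 - m₂))
    (hpos : S₂.PosDef)
    (mstar σstar : ℝ → ℝ)
    (hmstar : ∀ p, mstar p =
      (-(p ^ 2) * m₁ + Real.sign m₁ * p * Real.sqrt ((p ^ 2 + 4) * m₁ ^ 2 + 4 * s₁ ^ 2)) / 2)
    (hσstar : ∀ p, σstar p = |mstar p| / p) :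
    Tendsto mstar atTop (nhds (m₁ + s₁ ^ 2 / m₁)) ∧
      Tendsto σstar atTop (nhds 0) ∧
      ∀ p : ℝ, s₁⁻¹ * |m₁| < p →
        ∀ (μ : Fin d → ℝ) (Sig : Matrix (Fin d) (Fin d) ℝ), Sig.PosDef →
          -(1 / (n : ℝ)) * ∑ i, Real.log (mGaussPdf m₂ S₂ (x i).2) ≤
            -(1 / (n : ℝ)) * ∑ i, Real.log (mGaussPdf μ Sig (x i).2) := by
  obtain ⟨hlim1, hlim2⟩ : Tendsto mstar atTop (nhds (m₁ + s₁ ^ 2 / m₁)) ∧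
      Tendsto σstar atTop (nhds 0) := by
    have habs : 0 < |m₁| := abs_pos.mpr hm₁
    set c : ℝ := 4 * m₁ ^ 2 + 4 * s₁ ^ 2 with hcdef
    have hcpos : 0 < c := by positivity
    set f : ℝ → ℝ := fun p => Real.sign m₁ * (2 * (m₁ ^ 2 + s₁ ^ 2)) /
      (Real.sqrt (m₁ ^ 2 + c / p ^ 2) + |m₁|) with hfdef
    have h1 : Tendsto (fun p : ℝ => m₁ ^ 2 + c / p ^ 2) atTop (nhds (m₁ ^ 2)) := by
      have : Tendsto (fun p : ℝ => c / p ^ 2) atTop (nhds 0) :=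
        Tendsto.div_atTop tendsto_const_nhds (tendsto_pow_atTop two_ne_zero)
      simpa using tendsto_const_nhds.add this
    have h2 : Tendsto (fun p : ℝ => Real.sqrt (m₁ ^ 2 + c / p ^ 2) + |m₁|) atTop
        (nhds (2 * |m₁|)) := by
      have hs : Tendsto (fun p : ℝ => Real.sqrt (m₁ ^ 2 + c / p ^ 2)) atTop (nhds |m₁|) := by
        have := (Real.continuous_sqrt.tendsto (m₁ ^ 2)).comp h1
        simpa [Real.sqrt_sq_eq_abs, Function.comp_def] using this
      have := hs.add (tendsto_const_nhds (x := |m₁|))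
      convert this using 2
      ring
    have hfl : Tendsto f atTop (nhds (m₁ + s₁ ^ 2 / m₁)) := by
      have hd : (2 * |m₁|) ≠ 0 := by positivity
      have := Tendsto.div (tendsto_const_nhds
        (x := Real.sign m₁ * (2 * (m₁ ^ 2 + s₁ ^ 2)))) h2 hd
      convert this using 2
      · rfl
      rcases hm₁.lt_or_gt with hneg | hpos
      · rw [Real.sign_of_neg hneg, abs_of_neg hneg]
        field_simp
      · rw [Real.sign_of_pos hpos, abs_of_pos hpos]
        field_simp
    have heq : ∀ᶠ p : ℝ in atTop, mstar p = f p := by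
      filter_upwards [eventually_gt_atTop (0:ℝ)] with p hp
      have hp2 : (0:ℝ) < p ^ 2 := by positivity
      set s : ℝ := Real.sqrt (m₁ ^ 2 + c / p ^ 2) with hsdef
      have hsnn : 0 ≤ s := Real.sqrt_nonneg _
      have hs2 : s ^ 2 = m₁ ^ 2 + c / p ^ 2 := Real.sq_sqrt (by positivity)
      have hs2' : s ^ 2 * p ^ 2 = m₁ ^ 2 * p ^ 2 + c := by
        field_simp at hs2
        linarith [hs2]
      have hE : Real.sqrt ((p ^ 2 + 4) * m₁ ^ 2 + 4 * s₁ ^ 2) = p * s := by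
        have h3 : (p ^ 2 + 4) * m₁ ^ 2 + 4 * s₁ ^ 2 = p ^ 2 * (m₁ ^ 2 + c / p ^ 2) := by
          field_simp
          ring
        rw [h3, Real.sqrt_mul (by positivity), Real.sqrt_sq hp.le]
      have hgpos : 0 < s + |m₁| := by positivity
      rw [hmstar p, hE, hfdef]
      simp only [← hsdef]
      rw [div_eq_div_iff (by norm_num : (2:ℝ) ≠ 0) hgpos.ne']
      rcases hm₁.lt_or_gt with hneg | hpos
      · rw [Real.sign_of_neg hneg, abs_of_neg hneg]
        linear_combination (-1 : ℝ) * hs2'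
      · rw [Real.sign_of_pos hpos, abs_of_pos hpos]
        linear_combination hs2'
    have hm : Tendsto mstar atTop (nhds (m₁ + s₁ ^ 2 / m₁)) := hfl.congr' (heq.mono fun p hp => hp.symm)
    refine ⟨hm, ?_⟩
    have habs2 : Tendsto (fun p => |mstar p|) atTop (nhds |m₁ + s₁ ^ 2 / m₁|) :=
      hm.abs
    have : Tendsto (fun p => |mstar p| * p⁻¹) atTop (nhds (|m₁ + s₁ ^ 2 / m₁| * 0)) :=
      habs2.mul tendsto_inv_atTop_zero
    rw [mul_zero] at this
    have : Tendsto (fun p => |mstar p| / p) atTop (nhds 0) := by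
      simpa [div_eq_mul_inv] using this
    exact Tendsto.congr (fun p => (hσstar p).symm) this
  refine ⟨hlim1, hlim2, ?_⟩
  intro p hp μ Sig hSig
  have hnne : (n : ℝ) ≠ 0 := Nat.cast_ne_zero.mpr (by omega)
  have hnpos : (0:ℝ) < n := by positivity
  set y : Fin n → Fin d → ℝ := fun i => (x i).2 with hy
  set a : Fin n → Fin d → ℝ := fun i => y i - m₂ with ha
  set c : Fin d → ℝ := m₂ - μ with hc
  have hsuma : ∑ i, a i = 0 := by
    have h1 : ∑ i, a i = (∑ i, y i) - (n : ℝ) • m₂ := by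
      rw [Finset.sum_sub_distrib, Finset.sum_const, Finset.card_univ, Fintype.card_fin,
        ← Nat.cast_smul_eq_nsmul (R := ℝ)]
    rw [h1, hm₂, smul_smul, mul_one_div_cancel hnne, one_smul, sub_self]
  have hsum_outer : ∑ i, Matrix.vecMulVec (a i) (a i) = (n : ℝ) • S₂ := by
    rw [hS₂, smul_smul, mul_one_div_cancel hnne, one_smul]
  have hq : ∀ B : Matrix (Fin d) (Fin d) ℝ,
      ∑ i, (a i ⬝ᵥ B.mulVec (a i)) = (n : ℝ) * (B * S₂).trace := by
    intro B
    calc ∑ i, (a i ⬝ᵥ B.mulVec (a i)) = ∑ i, (B * Matrix.vecMulVec (a i) (a i)).trace := by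
          simp only [aux_dot_trace]
      _ = (B * ∑ i, Matrix.vecMulVec (a i) (a i)).trace := by
          rw [Matrix.mul_sum, Matrix.trace_sum]
      _ = (n : ℝ) * (B * S₂).trace := by
          rw [hsum_outer, Matrix.mul_smul, Matrix.trace_smul, smul_eq_mul]
  have hdecomp : ∀ B : Matrix (Fin d) (Fin d) ℝ,
      ∑ i, ((y i - μ) ⬝ᵥ B.mulVec (y i - μ)) =
        (∑ i, (a i ⬝ᵥ B.mulVec (a i))) + (n : ℝ) * (c ⬝ᵥ B.mulVec c) := by
    intro B
    have hsplit : ∀ i, y i - μ = a i + c := by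
      intro i; rw [ha, hc]; exact (sub_add_sub_cancel _ _ _).symm
    have hterm : ∀ i, (y i - μ) ⬝ᵥ B.mulVec (y i - μ) =
        (a i ⬝ᵥ B.mulVec (a i)) + (a i ⬝ᵥ B.mulVec c) + (c ⬝ᵥ B.mulVec (a i))
          + (c ⬝ᵥ B.mulVec c) := by
      intro i
      rw [hsplit i, Matrix.mulVec_add, dotProduct_add, add_dotProduct, add_dotProduct]
      ring
    rw [Finset.sum_congr rfl fun i _ => hterm i]
    rw [Finset.sum_add_distrib, Finset.sum_add_distrib, Finset.sum_add_distrib]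
    have h2 : ∑ i, (a i ⬝ᵥ B.mulVec c) = 0 := by
      rw [aux_sum_dot, hsuma, zero_dotProduct]
    have h3 : ∑ i, (c ⬝ᵥ B.mulVec (a i)) = 0 := by
      have : ∀ i, c ⬝ᵥ B.mulVec (a i) = (Matrix.vecMul c B) ⬝ᵥ (a i) := fun i =>
        Matrix.dotProduct_mulVec c B (a i)
      rw [Finset.sum_congr rfl fun i _ => this i, aux_dot_sum, hsuma, dotProduct_zero]
    rw [h2, h3, Finset.sum_const, Finset.card_univ, Fintype.card_fin, nsmul_eq_mul]
    ring
  -- key quantities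
  have hqS : ∑ i, (a i ⬝ᵥ S₂⁻¹.mulVec (a i)) = (n : ℝ) * d := by
    rw [hq, Matrix.nonsing_inv_mul _ hpos.det_pos.ne'.isUnit, Matrix.trace_one]
    simp
  have hqSig : ∑ i, ((y i - μ) ⬝ᵥ Sig⁻¹.mulVec (y i - μ)) =
      (n : ℝ) * (Sig⁻¹ * S₂).trace + (n : ℝ) * (c ⬝ᵥ Sig⁻¹.mulVec c) := by
    rw [hdecomp, hq]
  have hcnonneg : 0 ≤ c ⬝ᵥ Sig⁻¹.mulVec c := by
    have := hSig.inv.posSemidef.dotProduct_mulVec_nonneg c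
    simpa using this
  have hkey : Real.log S₂.det + d ≤ Real.log Sig.det + (Sig⁻¹ * S₂).trace :=
    aux_logdet_trace hpos hSig
  -- expand logs
  have hL : ∀ i, Real.log (mGaussPdf m₂ S₂ (y i)) = ((-(d : ℝ) / 2) * Real.log (2 * Real.pi)
      + (-(1 : ℝ) / 2) * Real.log S₂.det) + (-(1/2) * (a i ⬝ᵥ S₂⁻¹.mulVec (a i))) :=
    fun i => aux_log_pdf m₂ S₂ hpos (y i)
  have hR : ∀ i, Real.log (mGaussPdf μ Sig (y i)) = ((-(d : ℝ) / 2) * Real.log (2 * Real.pi)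
      + (-(1 : ℝ) / 2) * Real.log Sig.det)
      + (-(1/2) * ((y i - μ) ⬝ᵥ Sig⁻¹.mulVec (y i - μ))) :=
    fun i => aux_log_pdf μ Sig hSig (y i)
  have hLsum : ∑ i, Real.log (mGaussPdf m₂ S₂ (y i)) =
      (n : ℝ) * ((-(d : ℝ) / 2) * Real.log (2 * Real.pi) + (-(1 : ℝ) / 2) * Real.log S₂.det)
        + (-(1/2 : ℝ)) * ((n : ℝ) * d) := by
    rw [Finset.sum_congr rfl fun i _ => hL i, Finset.sum_add_distrib, ← Finset.mul_sum, hqS,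
      Finset.sum_const, Finset.card_univ, Fintype.card_fin, nsmul_eq_mul]
  have hRsum : ∑ i, Real.log (mGaussPdf μ Sig (y i)) =
      (n : ℝ) * ((-(d : ℝ) / 2) * Real.log (2 * Real.pi) + (-(1 : ℝ) / 2) * Real.log Sig.det)
        + (-(1/2 : ℝ)) * ((n : ℝ) * (Sig⁻¹ * S₂).trace + (n : ℝ) * (c ⬝ᵥ Sig⁻¹.mulVec c)) := by
    rw [Finset.sum_congr rfl fun i _ => hR i, Finset.sum_add_distrib, ← Finset.mul_sum, hqSig,
      Finset.sum_const, Finset.card_univ, Fintype.card_fin, nsmul_eq_mul]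
  rw [neg_mul, neg_mul, neg_le_neg_iff,
    mul_le_mul_iff_right₀ (by positivity : (0:ℝ) < 1 / (n : ℝ)), hLsum, hRsum]
  nlinarith [mul_le_mul_of_nonneg_left hkey hnpos.le, mul_nonneg hnpos.le hcnonneg]
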